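/- (Lemma 3) Let Γ be a finite nonempty subset of ℤ² and let Δ_Γ be its reduced Laplacian: the integer matrix indexed by Γ with Δ_Γ(v,v) = 4, Δ_Γ(v,w) = −1 if v and w are lattice neighbors, and 0 otherwise. Then the sandpile group G(Γ) = ℤ^Γ/Δ_Γ(ℤ^Γ) is generated by the classes of the delta functions δ_v with v ∈ ∂Γ, i.e. it is generated by adding sand at the boundary. -/
import Mathlib

open scoped BigOperators

/-- The homomorphism `Δ ⊗ A : A^Γ → A^Γ` induced by an integer matrix `Δ`. -/
def lapHom {Γ : Type} [Fintype Γ] (Δ : Matrix Γ Γ ℤ) (A : Type) [AddCommGroup A] :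
    (Γ → A) →+ (Γ → A) where
  toFun f v := ∑ w, Δ v w • f w
  map_zero' := by funext v; simp
  map_add' f g := by funext v; simp [smul_add, Finset.sum_add_distrib]

/-- Two points of `ℤ²` are lattice neighbors iff their Euclidean distance is 1. -/
def IsNbr (v w : ℤ × ℤ) : Prop := (v.1 - w.1) ^ 2 + (v.2 - w.2) ^ 2 = 1

open Classical in
/-- The reduced Laplacian of a finite `Γ ⊆ ℤ²`: `4` on the diagonal, `-1` between
lattice neighbors, `0` otherwise. -/
noncomputable def lapZ2 (Γ : Finset (ℤ × ℤ)) : Matrix Γ Γ ℤ :=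
  fun v w => if v = w then 4 else if IsNbr v.1 w.1 then -1 else 0

/-- The boundary of `Γ ⊆ ℤ²`: points of `Γ` having a lattice neighbor outside `Γ`. -/
def latBdry (Γ : Finset (ℤ × ℤ)) : Set (ℤ × ℤ) :=
  {v | v ∈ Γ ∧ ¬((v.1 + 1, v.2) ∈ Γ ∧ (v.1 - 1, v.2) ∈ Γ ∧
                 (v.1, v.2 + 1) ∈ Γ ∧ (v.1, v.2 - 1) ∈ Γ)}

lemma isNbr_cases {a b : ℤ × ℤ} (h : IsNbr a b) :
    a = (b.1 + 1, b.2) ∨ a = (b.1 - 1, b.2) ∨ a = (b.1, b.2 + 1) ∨ a = (b.1, b.2 - 1) := by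
  unfold IsNbr at h
  have h1 : a.1 - b.1 ≤ 1 := by nlinarith [sq_nonneg (a.1 - b.1 - 1), sq_nonneg (a.2 - b.2)]
  have h2 : -1 ≤ a.1 - b.1 := by nlinarith [sq_nonneg (a.1 - b.1 + 1), sq_nonneg (a.2 - b.2)]
  have h3 : a.2 - b.2 ≤ 1 := by nlinarith [sq_nonneg (a.2 - b.2 - 1), sq_nonneg (a.1 - b.1)]
  have h4 : -1 ≤ a.2 - b.2 := by nlinarith [sq_nonneg (a.2 - b.2 + 1), sq_nonneg (a.1 - b.1)]
  have hx : a.1 - b.1 = -1 ∨ a.1 - b.1 = 0 ∨ a.1 - b.1 = 1 := by omega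
  have hy : a.2 - b.2 = -1 ∨ a.2 - b.2 = 0 ∨ a.2 - b.2 = 1 := by omega
  have hP : a = (a.1, a.2) := rfl
  rcases hx with h'|h'|h' <;> rcases hy with h''|h''|h'' <;>
    rw [h', h''] at h <;> norm_num at h <;>
    · rw [hP]; refine ?_
      first
      | (left; ext <;> simp <;> omega)
      | (right; left; ext <;> simp <;> omega)
      | (right; right; left; ext <;> simp <;> omega)
      | (right; right; right; ext <;> simp <;> omega)

lemma isNbr_self_false (a : ℤ × ℤ) : ¬ IsNbr a a := by simp [IsNbr]

/-- Lemma 3: for a finite nonempty `Γ ⊆ ℤ²`, the sandpile group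
`G(Γ) = ℤ^Γ/Δ_Γ(ℤ^Γ)` is generated by the classes of the delta functions at the
boundary vertices, i.e. by adding sand at the boundary. -/
theorem sandpile_group_generated_by_boundary
    (Γ : Finset (ℤ × ℤ)) (hΓ : Γ.Nonempty) :
    AddSubgroup.closure
      {x : (↥Γ → ℤ) ⧸ (lapHom (lapZ2 Γ) ℤ).range |
        ∃ v : ↥Γ, (v : ℤ × ℤ) ∈ latBdry Γ ∧
          x = QuotientAddGroup.mk (Pi.single v (1 : ℤ))} = ⊤ := by
  classical
  set N := (lapHom (lapZ2 Γ) ℤ).range with hN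
  set π : (↥Γ → ℤ) →+ (↥Γ → ℤ) ⧸ N := QuotientAddGroup.mk' N with hπ
  set S : Set ((↥Γ → ℤ) ⧸ N) :=
    {x | ∃ v : ↥Γ, (v : ℤ × ℤ) ∈ latBdry Γ ∧
          x = QuotientAddGroup.mk (Pi.single v (1 : ℤ))} with hS
  set M : ℤ := (Γ.image Prod.fst).max' (hΓ.image _) with hM
  have hle : ∀ v : ↥Γ, (v : ℤ × ℤ).1 ≤ M := fun v =>
    Finset.le_max' _ _ (Finset.mem_image_of_mem _ v.2)
  -- key: every delta class is in the closure
  have key : ∀ n : ℕ, ∀ v : ↥Γ, (M - (v : ℤ × ℤ).1).toNat = n →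
      π (Pi.single v (1 : ℤ)) ∈ AddSubgroup.closure S := by
    intro n
    induction n using Nat.strong_induction_on with
    | _ n ih =>
      intro v hv
      by_cases hb : (v : ℤ × ℤ) ∈ latBdry Γ
      · exact AddSubgroup.subset_closure ⟨v, hb, rfl⟩
      · -- interior vertex
        have hint : ((v : ℤ × ℤ).1 + 1, (v : ℤ × ℤ).2) ∈ Γ ∧
            ((v : ℤ × ℤ).1 - 1, (v : ℤ × ℤ).2) ∈ Γ ∧
            ((v : ℤ × ℤ).1, (v : ℤ × ℤ).2 + 1) ∈ Γ ∧
            ((v : ℤ × ℤ).1, (v : ℤ × ℤ).2 - 1) ∈ Γ := by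
          by_contra hcon
          exact hb ⟨v.2, hcon⟩
        set w : ↥Γ := ⟨((v : ℤ × ℤ).1 + 1, (v : ℤ × ℤ).2), hint.1⟩ with hw
        have hwv : IsNbr (v : ℤ × ℤ) (w : ℤ × ℤ) := by
          simp [IsNbr, hw]
        set T : Finset ↥Γ := Finset.univ.filter (fun u : ↥Γ => IsNbr (u : ℤ × ℤ) (w : ℤ × ℤ))
          with hT
        have hvT : v ∈ T := by simp [hT, hwv]
        -- the basic Laplacian identity
        have E : (lapHom (lapZ2 Γ) ℤ) (Pi.single w (1 : ℤ)) =
            (4 : ℤ) • Pi.single w (1 : ℤ) - ∑ u ∈ T, Pi.single u (1 : ℤ) := by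
          funext u
          have hL : (lapHom (lapZ2 Γ) ℤ) (Pi.single w (1 : ℤ)) u = lapZ2 Γ u w := by
            have h0 : (lapHom (lapZ2 Γ) ℤ) (Pi.single w (1 : ℤ)) u
                = ∑ x, lapZ2 Γ u x • Pi.single w (1 : ℤ) x := rfl
            rw [h0, Finset.sum_eq_single w]
            · simp
            · intro b _ hb'; simp [Pi.single_apply, hb']
            · simp
          have hR : (∑ x ∈ T, Pi.single x (1 : ℤ)) u = if u ∈ T then 1 else 0 := by
            rw [Finset.sum_apply]
            simp [Pi.single_apply, Finset.sum_ite_eq' T u]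
          rw [hL]
          simp only [Pi.sub_apply, Pi.smul_apply, hR]
          by_cases h1 : u = w
          · subst h1
            simp [lapZ2, hT, isNbr_self_false]
          · have : ¬ (u : ℤ × ℤ) = (w : ℤ × ℤ) := fun hh => h1 (Subtype.ext hh)
            by_cases h2 : IsNbr (u : ℤ × ℤ) (w : ℤ × ℤ) <;>
              simp [lapZ2, h1, h2, hT, Pi.single_apply]
        -- pass to the quotient
        have hker : π ((lapHom (lapZ2 Γ) ℤ) (Pi.single w (1 : ℤ))) = 0 := by
          rw [hπ, QuotientAddGroup.mk'_apply]
          exact (QuotientAddGroup.eq_zero_iff _).mpr ⟨_, rfl⟩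
        have hsum : ∑ u ∈ T, π (Pi.single u (1 : ℤ)) = (4 : ℤ) • π (Pi.single w (1 : ℤ)) := by
          have := congrArg π E
          rw [hker, map_sub, map_zsmul, map_sum] at this
          exact (sub_eq_zero.mp this.symm).symm
        have hvsplit : π (Pi.single v (1 : ℤ)) =
            (4 : ℤ) • π (Pi.single w (1 : ℤ)) - ∑ u ∈ T.erase v, π (Pi.single u (1 : ℤ)) := by
          rw [← hsum, ← Finset.add_sum_erase _ _ hvT]
          abel
        rw [hvsplit]
        -- membership of each term
        have hwmem : π (Pi.single w (1 : ℤ)) ∈ AddSubgroup.closure S := by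
          have hwle := hle w
          refine ih ((M - (w : ℤ × ℤ).1).toNat) ?_ w rfl
          have : (w : ℤ × ℤ).1 = (v : ℤ × ℤ).1 + 1 := rfl
          omega
        refine sub_mem (AddSubgroup.zsmul_mem _ hwmem 4) (AddSubgroup.sum_mem _ ?_)
        intro u hu
        have huv : u ≠ v := Finset.ne_of_mem_erase hu
        have hunbr : IsNbr (u : ℤ × ℤ) (w : ℤ × ℤ) := by
          have := Finset.mem_of_mem_erase hu
          simpa [hT] using this
        have hugt : (v : ℤ × ℤ).1 < (u : ℤ × ℤ).1 := by
          have hw1 : (w : ℤ × ℤ).1 = (v : ℤ × ℤ).1 + 1 := rfl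
          have hw2 : (w : ℤ × ℤ).2 = (v : ℤ × ℤ).2 := rfl
          rcases isNbr_cases hunbr with h'|h'|h'|h'
          · have : (u : ℤ × ℤ).1 = (w : ℤ × ℤ).1 + 1 := by rw [h']
            omega
          · exfalso
            apply huv
            apply Subtype.ext
            rw [h']
            have : (v : ℤ × ℤ) = ((v : ℤ × ℤ).1, (v : ℤ × ℤ).2) := rfl
            rw [this]
            ext <;> simp [hw1, hw2] <;> omega
          · have : (u : ℤ × ℤ).1 = (w : ℤ × ℤ).1 := by rw [h']
            omega
          · have : (u : ℤ × ℤ).1 = (w : ℤ × ℤ).1 := by rw [h']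
            omega
        have hule := hle u
        refine ih ((M - (u : ℤ × ℤ).1).toNat) ?_ u rfl
        omega
  -- conclude
  rw [eq_top_iff]
  rintro x -
  obtain ⟨f, rfl⟩ := QuotientAddGroup.mk_surjective x
  have hf : f = ∑ v : ↥Γ, f v • Pi.single v (1 : ℤ) := by
    funext u
    rw [Finset.sum_apply]
    simp [Pi.single_apply]
  have : (QuotientAddGroup.mk f : (↥Γ → ℤ) ⧸ N) = π f := rfl
  rw [this, hf, map_sum]
  refine AddSubgroup.sum_mem _ fun v _ => ?_
  rw [map_zsmul]
  exact AddSubgroup.zsmul_mem _ (key _ v rfl) _
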